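/- Uniqueness of the semantics of arbitrary CP-theories: Let C be a CP-theory (bodies may contain negation). If ⟨T₁, I₁, E₁⟩ and ⟨T₂, I₂, E₂⟩ are execution models of C, then π_{T₁} = π_{T₂}, i.e., for every interpretation J, the sum of P(l) over the leaves l of T₁ with I₁(l) = J equals the sum of P(l) over the leaves l of T₂ with I₂(l) = J. -/

import Mathlib

/-!
Both execution models compute the same quantity `canonDist C univ ∅ J`, obtained by
repeatedly firing an arbitrary *enabled* law: one not yet fired whose body is true in the
potential of the current state (the common end point of all terminal hypothetical
derivation sequences). The execution-model condition says precisely that every law fired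
in the tree is enabled, and a leaf has no enabled law. The order of firing is irrelevant:
an enabled law stays enabled when another enabled law fires, since the potential only
loses atoms that have just become true, and two laws fired in either order produce the
same distribution. Induction down the tree then shows that the mass of the leaves below
a node `s` ending in `J` is `P(s)` times `canonDist` at `s`.
-/

noncomputable section
open scoped Classical

namespace CP

/-- The three truth values. -/
inductive TV where
  | f | u | t
deriving DecidableEq

namespace TV

/-- Rank of a truth value in the truth order `f ≤_t u ≤_t t`. -/
def rank : TV → ℕ
  | f => 0
  | u => 1
  | t => 2

/-- Minimum in the truth order. -/
def tmin (a b : TV) : TV := if rank a ≤ rank b then a else b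

/-- Maximum in the truth order. -/
def tmax (a b : TV) : TV := if rank a ≤ rank b then b else a

/-- Kleene negation. -/
def tneg : TV → TV
  | f => t
  | u => u
  | t => f

/-- The precision order on truth values: `u ≤_p f` and `u ≤_p t` (and reflexivity). -/
def lep (a b : TV) : Prop := a = u ∨ a = b

end TV

/-- Pointwise precision order on three-valued interpretations. -/
def leP {A : Type} (ν ν' : A → TV) : Prop := ∀ a, TV.lep (ν a) (ν' a)

/-- Propositional formulas over a type `A` of atoms. -/
inductive Form (A : Type) where
  | atom : A → Form A
  | conj : Form A → Form A → Form A
  | disj : Form A → Form A → Form A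
  | neg  : Form A → Form A

namespace Form

variable {A : Type}

/-- Two-valued satisfaction of a formula in an interpretation (a set of atoms). -/
def sat (I : Set A) : Form A → Prop
  | .atom a => a ∈ I
  | .conj φ ψ => sat I φ ∧ sat I ψ
  | .disj φ ψ => sat I φ ∨ sat I ψ
  | .neg φ => ¬ sat I φ

/-- Kleene three-valued valuation of a formula. -/
def val (ν : A → TV) : Form A → TV
  | .atom a => ν a
  | .conj φ ψ => TV.tmin (val ν φ) (val ν ψ)
  | .disj φ ψ => TV.tmax (val ν φ) (val ν ψ)
  | .neg φ => TV.tneg (val ν φ)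

/-- A formula is positive if it contains no negation. -/
def Positive : Form A → Prop
  | .atom _ => True
  | .conj φ ψ => Positive φ ∧ Positive ψ
  | .disj φ ψ => Positive φ ∧ Positive ψ
  | .neg _ => False

/-- The set of atoms occurring in a formula. -/
def atoms : Form A → Set A
  | .atom a => {a}
  | .conj φ ψ => atoms φ ∪ atoms ψ
  | .disj φ ψ => atoms φ ∪ atoms ψ
  | .neg φ => atoms φ

/-- Atoms occurring under a number of negations of parity `b` (`true` = odd). -/
def atomsPar : Bool → Form A → Set A
  | b, .atom a => if b then ∅ else {a}
  | b, .conj φ ψ => atomsPar b φ ∪ atomsPar b ψ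
  | b, .disj φ ψ => atomsPar b φ ∪ atomsPar b ψ
  | b, .neg φ => atomsPar (!b) φ

/-- Atoms occurring within the scope of an odd number of negations. -/
def natoms (φ : Form A) : Set A := atomsPar true φ

end Form

/-- A CP-law: a nonempty head list of distinct atoms with probabilities in `(0,1]`
summing to at most `1`, together with a body formula. -/
structure CPLaw (A : Type) where
  head : List (A × ℝ)
  body : Form A
  head_ne : head ≠ []
  head_nodup : (head.map Prod.fst).Nodup
  head_pos : ∀ p ∈ head, 0 < p.2 ∧ p.2 ≤ 1
  head_sum : (head.map Prod.snd).sum ≤ 1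

namespace CPLaw

variable {A : Type}

/-- `head_At(r)`: the set of atoms occurring in the head of `r`. -/
def headAt (r : CPLaw A) : Set A := {a | a ∈ r.head.map Prod.fst}

/-- The sum `Σᵢ αᵢ` of the probabilities in the head of `r`. -/
def psum (r : CPLaw A) : ℝ := (r.head.map Prod.snd).sum

end CPLaw

/-- A probabilistic process: a finite rooted tree (given by a parent function with a
depth function ensuring well-foundedness), with an interpretation, an edge probability
and a path probability attached to each node, together with (for use in execution
models) a CP-law index `rule` attached to each node and, for each non-root node, the
`choice` in the head of the rule fired at its parent that it corresponds to
(`none` is the extra child carrying the leftover probability `1 - Σᵢ αᵢ`). -/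
structure Proc (A R : Type) where
  Node : Type
  [fintypeNode : Fintype Node]
  root : Node
  parent : Node → Node
  depth : Node → ℕ
  interp : Node → Set A
  prob : Node → ℝ
  pathProb : Node → ℝ
  rule : Node → R
  choice : Node → Option ℕ
  depth_root : depth root = 0
  depth_parent : ∀ s, s ≠ root → depth s = depth (parent s) + 1
  pathProb_root : pathProb root = 1
  pathProb_parent : ∀ s, s ≠ root → pathProb s = pathProb (parent s) * prob s

attribute [instance] Proc.fintypeNode

namespace Proc

variable {A R : Type} (W : Proc A R)

/-- `s'` is a child of `s`. -/
def isChild (s' s : W.Node) : Prop := s' ≠ W.root ∧ W.parent s' = s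

/-- `s` is a leaf. -/
def isLeaf (s : W.Node) : Prop := ∀ s', ¬ W.isChild s' s

/-- `strictAnc a b`: `a` is a strict ancestor of `b`. -/
def strictAnc (a b : W.Node) : Prop :=
  Relation.TransGen (fun y x => W.isChild y x) b a

end Proc

variable {A R : Type}

/-- `R_E(s)`: the CP-laws that have not fired at any strict ancestor of `s`. -/
def RE (W : Proc A R) (s : W.Node) : Set R :=
  {r | ∀ s', W.strictAnc s' s → W.rule s' ≠ r}

/-- The CP-law `E(s)` fires at the non-leaf node `s`: `s` has exactly one child for
each head element `(Aᵢ, αᵢ)` (with interpretation `I(s) ∪ {Aᵢ}` and edge probability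
`αᵢ`), plus exactly one extra child with unchanged interpretation and edge probability
`1 - Σᵢ αᵢ` in case `Σᵢ αᵢ < 1`. -/
def FiresAt (C : R → CPLaw A) (W : Proc A R) (s : W.Node) : Prop :=
  (∀ s', W.isChild s' s →
     (∀ i, W.choice s' = some i →
        ∃ h : i < (C (W.rule s)).head.length,
          W.interp s' = insert ((C (W.rule s)).head.get ⟨i, h⟩).1 (W.interp s) ∧
          W.prob s' = ((C (W.rule s)).head.get ⟨i, h⟩).2) ∧
     (W.choice s' = none →
        (C (W.rule s)).psum < 1 ∧ W.interp s' = W.interp s ∧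
          W.prob s' = 1 - (C (W.rule s)).psum)) ∧
  (∀ s₁ s₂, W.isChild s₁ s → W.isChild s₂ s → W.choice s₁ = W.choice s₂ → s₁ = s₂) ∧
  (∀ i, i < (C (W.rule s)).head.length → ∃ s', W.isChild s' s ∧ W.choice s' = some i) ∧
  ((C (W.rule s)).psum < 1 → ∃ s', W.isChild s' s ∧ W.choice s' = none)

/-- `⟨W, I, E⟩` is a weak execution model of the CP-theory `C`. -/
def IsWEM (C : R → CPLaw A) (W : Proc A R) : Prop :=
  W.interp W.root = (∅ : Set A) ∧
  (∀ s, s ≠ W.root → 0 ≤ W.prob s ∧ W.prob s ≤ 1) ∧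
  (∀ s, ¬ W.isLeaf s →
    (∑ s' ∈ Finset.univ.filter (fun s' => W.isChild s' s), W.prob s') = 1) ∧
  (∀ s, ¬ W.isLeaf s →
    W.rule s ∈ RE W s ∧ Form.sat (W.interp s) (C (W.rule s)).body ∧ FiresAt C W s) ∧
  (∀ l, W.isLeaf l → ∀ r ∈ RE W l, ¬ Form.sat (W.interp l) (C r).body)

/-- `ν 0, …, ν n` is a hypothetical derivation sequence at node `s`. -/
def IsHDS (C : R → CPLaw A) (W : Proc A R) (s : W.Node)
    (ν : ℕ → A → TV) (n : ℕ) : Prop :=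
  (∀ a, ν 0 a = if a ∈ W.interp s then TV.t else TV.f) ∧
  ∀ i, i < n → ∃ r ∈ RE W s,
    Form.val (ν i) (C r).body ≠ TV.f ∧
    (∀ p ∈ (C r).headAt, ν i p = TV.f → ν (i+1) p = TV.u) ∧
    (∀ p, ¬ (p ∈ (C r).headAt ∧ ν i p = TV.f) → ν (i+1) p = ν i p)

/-- The hypothetical derivation sequence `ν 0, …, ν n` at `s` is terminal. -/
def HDSTerminal (C : R → CPLaw A) (W : Proc A R) (s : W.Node)
    (ν : ℕ → A → TV) (n : ℕ) : Prop :=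
  ¬ ∃ r ∈ RE W s, Form.val (ν n) (C r).body ≠ TV.f ∧
      ∃ p ∈ (C r).headAt, ν n p = TV.f

/-- `⟨W, I, E⟩` is an execution model of `C`: a weak execution model in which, at every
non-leaf node, the body of the fired CP-law is not unknown in the potential of the
node (the common limit of all terminal hypothetical derivation sequences). -/
def IsExec (C : R → CPLaw A) (W : Proc A R) : Prop :=
  IsWEM C W ∧
  ∀ s, ¬ W.isLeaf s → ∀ ν n, IsHDS C W s ν n → HDSTerminal C W s ν n →
    Form.val (ν n) (C (W.rule s)).body ≠ TV.u

/-- `π_T`: the probability distribution on interpretations induced by a process. -/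
def piT (W : Proc A R) (J : Set A) : ℝ :=
  ∑ l ∈ Finset.univ.filter (fun l => W.isLeaf l ∧ W.interp l = J), W.pathProb l

namespace TV

lemma lep_tmin : ∀ {a b a' b' : TV}, lep a a' → lep b b' → lep (tmin a b) (tmin a' b') := by
  rintro ⟨⟩ ⟨⟩ ⟨⟩ ⟨⟩ ha hb <;> simp_all [lep, tmin, rank]

lemma lep_tmax : ∀ {a b a' b' : TV}, lep a a' → lep b b' → lep (tmax a b) (tmax a' b') := by
  rintro ⟨⟩ ⟨⟩ ⟨⟩ ⟨⟩ ha hb <;> simp_all [lep, tmax, rank]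

lemma lep_tneg : ∀ {a a' : TV}, lep a a' → lep (tneg a) (tneg a') := by
  rintro ⟨⟩ ⟨⟩ h <;> simp_all [lep, tneg]

lemma ne_f_of_lep {a b : TV} (h : lep a b) (hb : b ≠ f) : a ≠ f := by
  rcases h with rfl | rfl
  · nofun
  · exact hb

lemma eq_t_of_lep {b : TV} (h : lep t b) : b = t := by
  rcases h with h | h
  · cases h
  · exact h.symm

end TV

namespace Form

variable {A : Type}

lemma lep_val_of_leP {ν ν' : A → TV} (h : leP ν ν') (φ : Form A) :
    TV.lep (val ν φ) (val ν' φ) := by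
  induction φ with
  | atom a => exact h a
  | conj φ ψ ihφ ihψ => exact TV.lep_tmin ihφ ihψ
  | disj φ ψ ihφ ihψ => exact TV.lep_tmax ihφ ihψ
  | neg φ ih => exact TV.lep_tneg ih

end Form

/-- Every stage of a hypothetical derivation sequence at a node with interpretation `I`
has this form. -/
def nuOf {A : Type} (I U : Set A) : A → TV :=
  fun a => if a ∈ I then TV.t else if a ∈ U then TV.u else TV.f

section ThreeValued

variable {A : Type} {I I' U U' : Set A} {a : A}

lemma nuOf_eq_f_iff : nuOf I U a = TV.f ↔ a ∉ I ∪ U := by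
  unfold nuOf
  split_ifs <;> simp_all

lemma nuOf_empty (I : Set A) (a : A) : nuOf I ∅ a = if a ∈ I then TV.t else TV.f := by
  by_cases h : a ∈ I <;> simp [nuOf, h]

lemma leP_nuOf (hI : I ⊆ I') (hU : I' ∪ U' ⊆ I ∪ U) : leP (nuOf I U) (nuOf I' U') := by
  intro a
  unfold nuOf TV.lep
  by_cases ha : a ∈ I
  · simp [ha, hI ha]
  · by_cases ha' : a ∈ U
    · simp [ha, ha']
    · have : a ∉ I' ∪ U' := fun h => by simpa [ha, ha'] using hU h
      simp_all

lemma val_nuOf_empty (I : Set A) (φ : Form A) :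
    Form.val (nuOf I ∅) φ = if Form.sat I φ then TV.t else TV.f := by
  induction φ with
  | atom a => by_cases h : a ∈ I <;> simp [Form.val, Form.sat, nuOf, h]
  | conj φ ψ ihφ ihψ =>
    rw [Form.val, ihφ, ihψ]
    by_cases h₁ : Form.sat I φ <;> by_cases h₂ : Form.sat I ψ <;>
      simp [Form.sat, h₁, h₂, TV.tmin, TV.rank]
  | disj φ ψ ihφ ihψ =>
    rw [Form.val, ihφ, ihψ]
    by_cases h₁ : Form.sat I φ <;> by_cases h₂ : Form.sat I ψ <;>
      simp [Form.sat, h₁, h₂, TV.tmax, TV.rank]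
  | neg φ ih =>
    rw [Form.val, ih]
    by_cases h : Form.sat I φ <;> simp [Form.sat, h, TV.tneg]

lemma leP_nuOf_empty (I U : Set A) : leP (nuOf I U) (nuOf I ∅) :=
  leP_nuOf subset_rfl (by simp)

lemma val_eq_t_of_sat_of_ne_u {φ : Form A} (hφ : Form.sat I φ)
    (hu : Form.val (nuOf I U) φ ≠ TV.u) : Form.val (nuOf I U) φ = TV.t := by
  have h := Form.lep_val_of_leP (leP_nuOf_empty I U) φ
  rw [val_nuOf_empty, if_pos hφ] at h
  exact h.resolve_left hu

lemma sat_of_val_eq_t {φ : Form A} (ht : Form.val (nuOf I U) φ = TV.t) : Form.sat I φ := by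
  have h := Form.lep_val_of_leP (leP_nuOf_empty I U) φ
  rw [ht, val_nuOf_empty] at h
  by_contra hφ
  simpa [hφ] using TV.eq_t_of_lep h

lemma nuOf_union_diff_of_eq_f {H : Set A} {p : A} (hp : p ∈ H) (hpf : nuOf I U p = TV.f) :
    nuOf I (U ∪ (H \ (I ∪ U))) p = TV.u := by
  have hpIU := nuOf_eq_f_iff.mp hpf
  have hpI : p ∉ I := fun h => hpIU (Or.inl h)
  simp [nuOf, hpI, hp, hpIU]

lemma nuOf_union_diff_of_not {H : Set A} {p : A} (hp : ¬ (p ∈ H ∧ nuOf I U p = TV.f)) :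
    nuOf I (U ∪ (H \ (I ∪ U))) p = nuOf I U p := by
  rw [nuOf_eq_f_iff, not_and, not_not] at hp
  unfold nuOf
  by_cases hpI : p ∈ I
  · simp [hpI]
  · by_cases hpU : p ∈ U
    · simp [hpI, hpU]
    · have : p ∉ H := fun hpH => by simpa [hpI, hpU] using hp hpH
      simp [hpI, hpU, this]

end ThreeValued

section Derivation

variable {A R : Type} (C : R → CPLaw A)

/-- The unknown-sets `U` for which `nuOf I U` ends a hypothetical derivation sequence
that starts from `I` and uses laws from `S`. -/
inductive Derivable (I : Set A) (S : Set R) : Set A → Prop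
  | nil : Derivable I S ∅
  | step {U : Set A} {r : R} : Derivable I S U → r ∈ S →
      Form.val (nuOf I U) (C r).body ≠ TV.f →
      Derivable I S (U ∪ ((C r).headAt \ (I ∪ U)))

def Terminal (I : Set A) (S : Set R) (U : Set A) : Prop :=
  ∀ r ∈ S, Form.val (nuOf I U) (C r).body ≠ TV.f → (C r).headAt ⊆ I ∪ U

/-- The body of `r` is true in the potential of `(I, S)`. -/
def Enabled (I : Set A) (S : Set R) (r : R) : Prop :=
  r ∈ S ∧ ∀ U, Derivable C I S U → Terminal C I S U →
    Form.val (nuOf I U) (C r).body = TV.t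

variable {C} {I : Set A} {S : Set R} {r : R} {U V : Set A}

/-- In particular the terminal derivable set, the potential of `(I, S)`, is unique. -/
lemma Derivable.subset_of_terminal (hU : Derivable C I S U) (hV : Terminal C I S V) :
    U ⊆ V := by
  induction hU with
  | nil => exact Set.empty_subset V
  | @step U r _ hr hval ih =>
    have hmono : leP (nuOf I V) (nuOf I U) :=
      leP_nuOf subset_rfl (Set.union_subset_union_right I ih)
    have hV' : Form.val (nuOf I V) (C r).body ≠ TV.f :=
      TV.ne_f_of_lep (Form.lep_val_of_leP hmono _) hval
    rintro a (ha | ⟨haH, haIU⟩)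
    · exact ih ha
    · exact (hV r hr hV' haH).resolve_left fun haI => haIU (Or.inl haI)

lemma exists_derivable_terminal [Finite A] (C : R → CPLaw A) (I : Set A) (S : Set R) :
    ∃ V, Derivable C I S V ∧ Terminal C I S V := by
  obtain ⟨V, hV, hmax⟩ := (Set.toFinite {U | Derivable C I S U}).exists_maximal ⟨∅, .nil⟩
  refine ⟨V, hV, fun r hr hval => ?_⟩
  by_contra hnot
  obtain ⟨a, haH, haIV⟩ := Set.not_subset.mp hnot
  have hsub := hmax (Derivable.step hV hr hval) Set.subset_union_left
  exact haIV (Or.inr (hsub (Or.inr ⟨haH, haIV⟩)))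

lemma Enabled.sat [Finite A] (h : Enabled C I S r) : Form.sat I (C r).body := by
  obtain ⟨V, hV, hVt⟩ := exists_derivable_terminal C I S
  exact sat_of_val_eq_t (h.2 V hV hVt)

lemma Enabled.headAt_subset (h : Enabled C I S r) (hV : Derivable C I S V)
    (hVt : Terminal C I S V) : (C r).headAt ⊆ I ∪ V :=
  hVt r h.1 (by rw [h.2 V hV hVt]; nofun)

lemma Enabled.of_fire [Finite A] {r' : R} {I' : Set A} (hr : Enabled C I S r)
    (hr' : Enabled C I S r') (hne : r' ≠ r) (hI : I ⊆ I') (hI' : I' ⊆ I ∪ (C r).headAt) :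
    Enabled C I' (S \ {r}) r' := by
  obtain ⟨V, hV, hVt⟩ := exists_derivable_terminal C I S
  have hunion : I' ∪ (V \ I') = I ∪ V := by
    have := hr.headAt_subset hV hVt
    rw [Set.union_sdiff_self]
    apply subset_antisymm
    · exact Set.union_subset (fun a ha => (hI' ha).elim Or.inl fun h => this h)
        Set.subset_union_right
    · exact Set.union_subset_union_left V hI
  have hmono : ∀ U', U' ⊆ V \ I' → leP (nuOf I V) (nuOf I' U') := fun U' hU' =>
    leP_nuOf hI ((Set.union_subset_union_right I' hU').trans hunion.le)
  have hVt' : Terminal C I' (S \ {r}) (V \ I') := fun r'' hr'' hval => by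
    rw [hunion]
    exact hVt r'' hr''.1 (TV.ne_f_of_lep (Form.lep_val_of_leP (hmono _ subset_rfl) _) hval)
  refine ⟨⟨hr'.1, hne⟩, fun U' hU' _ => ?_⟩
  exact TV.eq_t_of_lep (hr'.2 V hV hVt ▸
    Form.lep_val_of_leP (hmono U' (hU'.subset_of_terminal hVt')) (C r').body)

end Derivation

section ExecutionModel

variable {A R : Type} {C : R → CPLaw A} {W : Proc A R}

lemma Derivable.exists_isHDS {s : W.Node} {U : Set A}
    (hU : Derivable C (W.interp s) (RE W s) U) :
    ∃ ν n, IsHDS C W s ν n ∧ ν n = nuOf (W.interp s) U := by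
  induction hU with
  | nil => exact ⟨fun _ => nuOf (W.interp s) ∅, 0, ⟨nuOf_empty _, nofun⟩, rfl⟩
  | @step U r _ hr hval ih =>
    obtain ⟨ν, n, ⟨hν₀, hνstep⟩, hνn⟩ := ih
    let ν' := nuOf (W.interp s) (U ∪ ((C r).headAt \ (W.interp s ∪ U)))
    refine ⟨Function.update ν (n + 1) ν', n + 1, ⟨?_, fun i hi => ?_⟩,
      Function.update_self ..⟩
    · simpa [Function.update_of_ne (Nat.succ_ne_zero n).symm] using hν₀
    · rw [Function.update_of_ne (by omega)]
      rcases Nat.lt_succ_iff_lt_or_eq.mp hi with hi | rfl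
      · rw [Function.update_of_ne (by omega)]
        exact hνstep i hi
      · rw [Function.update_self, hνn]
        exact ⟨r, hr, hval, fun p hp hpf => nuOf_union_diff_of_eq_f hp hpf,
          fun p hp => nuOf_union_diff_of_not hp⟩

lemma Terminal.hdsTerminal {s : W.Node} {U : Set A} {ν : ℕ → A → TV} {n : ℕ}
    (hU : Terminal C (W.interp s) (RE W s) U) (hνn : ν n = nuOf (W.interp s) U) :
    HDSTerminal C W s ν n := by
  rintro ⟨r, hr, hval, p, hp, hpf⟩
  rw [hνn] at hval hpf
  exact nuOf_eq_f_iff.mp hpf (hU r hr hval hp)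

lemma IsExec.enabled (hW : IsExec C W) {s : W.Node} (hs : ¬ W.isLeaf s) :
    Enabled C (W.interp s) (RE W s) (W.rule s) := by
  obtain ⟨hRE, hsat, -⟩ := hW.1.2.2.2.1 s hs
  refine ⟨hRE, fun U hU hUt => ?_⟩
  obtain ⟨ν, n, hν, hνn⟩ := hU.exists_isHDS
  have hu := hW.2 s hs ν n hν (hUt.hdsTerminal hνn)
  rw [hνn] at hu
  exact val_eq_t_of_sat_of_ne_u hsat hu

lemma IsWEM.not_enabled_of_isLeaf [Finite A] (hW : IsWEM C W) {l : W.Node}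
    (hl : W.isLeaf l) (r : R) : ¬ Enabled C (W.interp l) (RE W l) r :=
  fun h => hW.2.2.2.2 l hl r h.1 h.sat

end ExecutionModel

namespace CPLaw

variable {A : Type}

def expect (r : CPLaw A) (I : Set A) (K : Set A → ℝ) : ℝ :=
  ∑ i : Fin r.head.length, (r.head.get i).2 * K (insert (r.head.get i).1 I) +
    (1 - r.psum) * K I

lemma get_fst_mem_headAt (r : CPLaw A) (i : Fin r.head.length) : (r.head.get i).1 ∈ r.headAt :=
  List.mem_map_of_mem (List.get_mem _ _)

lemma expect_congr (r : CPLaw A) (I : Set A) {K K' : Set A → ℝ}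
    (h : ∀ I', I ⊆ I' → I' ⊆ I ∪ r.headAt → K I' = K' I') :
    r.expect I K = r.expect I K' := by
  have hins (i : Fin r.head.length) : I ⊆ insert (r.head.get i).1 I ∧
      insert (r.head.get i).1 I ⊆ I ∪ r.headAt :=
    ⟨Set.subset_insert _ _, Set.insert_subset (Or.inr (r.get_fst_mem_headAt i))
      Set.subset_union_left⟩
  unfold expect
  rw [h I subset_rfl Set.subset_union_left]
  congr 1
  exact Finset.sum_congr rfl fun i _ => by rw [h _ (hins i).1 (hins i).2]

lemma expect_comm (r r' : CPLaw A) (I : Set A) (K : Set A → ℝ) :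
    r.expect I (fun I' => r'.expect I' K) = r'.expect I (fun I' => r.expect I' K) := by
  have hdouble : ∑ i : Fin r.head.length, (r.head.get i).2 * ∑ j : Fin r'.head.length,
      (r'.head.get j).2 * K (insert (r'.head.get j).1 (insert (r.head.get i).1 I)) =
      ∑ j : Fin r'.head.length, (r'.head.get j).2 * ∑ i : Fin r.head.length,
      (r.head.get i).2 * K (insert (r.head.get i).1 (insert (r'.head.get j).1 I)) := by
    simp only [Finset.mul_sum]
    rw [Finset.sum_comm]
    refine Finset.sum_congr rfl fun j _ => Finset.sum_congr rfl fun i _ => ?_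
    rw [Set.insert_comm]
    ring
  simp only [expect, mul_add, Finset.sum_add_distrib, hdouble,
    mul_left_comm (r.head.get _).2 (1 - r'.psum), mul_left_comm (r'.head.get _).2 (1 - r.psum),
    ← Finset.mul_sum]
  ring

end CPLaw

section CanonicalDistribution

variable {A R : Type} (C : R → CPLaw A)

/-- By `canonDist_eq_expect`, the choice of the enabled law fired here does not matter. -/
def canonDist (S : Finset R) (I J : Set A) : ℝ :=
  if h : ∃ r ∈ S, Enabled C I S r then
    (C h.choose).expect I fun I' => canonDist (S.erase h.choose) I' J
  else if I = J then 1 else 0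
termination_by S.card
decreasing_by exact Finset.card_erase_lt_of_mem h.choose_spec.1

variable {C}

lemma canonDist_of_not_enabled {S : Finset R} {I : Set A} (h : ∀ r ∈ S, ¬ Enabled C I S r)
    (J : Set A) : canonDist C S I J = if I = J then 1 else 0 := by
  rw [canonDist, dif_neg (by simpa using h)]

lemma canonDist_eq_expect [Finite A] (J : Set A) {S : Finset R} {I : Set A} {r : R}
    (hrS : r ∈ S) (hr : Enabled C I S r) :
    canonDist C S I J = (C r).expect I fun I' => canonDist C (S.erase r) I' J := by
  induction S using Finset.strongInduction generalizing I r with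
  | H S ih =>
  have hex : ∃ r ∈ S, Enabled C I S r := ⟨r, hrS, hr⟩
  rw [canonDist, dif_pos hex]
  obtain ⟨hr₀S, hr₀⟩ := hex.choose_spec
  set r₀ := hex.choose
  by_cases heq : r₀ = r
  · rw [heq]
  have hr₀r : r₀ ∈ S.erase r := Finset.mem_erase.mpr ⟨heq, hr₀S⟩
  have hrr₀ : r ∈ S.erase r₀ := Finset.mem_erase.mpr ⟨Ne.symm heq, hrS⟩
  have hfire {a b : R} (ha : Enabled C I S a) (hb : Enabled C I S b) (hne : b ≠ a)
      (I' : Set A) (h₁ : I ⊆ I') (h₂ : I' ⊆ I ∪ (C a).headAt) :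
      Enabled C I' ↑(S.erase a) b := by
    rw [Finset.coe_erase]
    exact ha.of_fire hb hne h₁ h₂
  calc (C r₀).expect I (fun I' => canonDist C (S.erase r₀) I' J)
      = (C r₀).expect I (fun I' => (C r).expect I' fun I'' =>
          canonDist C ((S.erase r₀).erase r) I'' J) :=
        (C r₀).expect_congr I fun I' h₁ h₂ => ih _ (Finset.erase_ssubset hr₀S) hrr₀
          (hfire hr₀ hr (Ne.symm heq) I' h₁ h₂)
    _ = (C r).expect I (fun I' => (C r₀).expect I' fun I'' =>
          canonDist C ((S.erase r).erase r₀) I'' J) := by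
        rw [CPLaw.expect_comm, Finset.erase_right_comm]
    _ = (C r).expect I (fun I' => canonDist C (S.erase r) I' J) :=
        ((C r).expect_congr I fun I' h₁ h₂ => ih _ (Finset.erase_ssubset hrS) hr₀r
          (hfire hr hr₀ heq I' h₁ h₂)).symm

end CanonicalDistribution

namespace Proc

variable {A R : Type} {W : Proc A R}

/-- `l` lies in the subtree rooted at `s`. -/
def IsDesc (W : Proc A R) (s l : W.Node) : Prop :=
  Relation.ReflTransGen (fun y x => W.isChild y x) l s

def children (W : Proc A R) (s : W.Node) : Finset W.Node := Finset.univ.filter (W.isChild · s)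

lemma mem_children {c s : W.Node} : c ∈ W.children s ↔ W.isChild c s := by
  simp [children]

lemma depth_of_isChild {c s : W.Node} (hc : W.isChild c s) : W.depth c = W.depth s + 1 :=
  hc.2 ▸ W.depth_parent c hc.1

lemma isDesc_root (l : W.Node) : W.IsDesc W.root l := by
  induction hd : W.depth l generalizing l with
  | zero =>
    by_contra h
    have := W.depth_parent l fun hl => h (hl ▸ .refl)
    omega
  | succ n ih =>
    by_cases hl : l = W.root
    · exact hl ▸ .refl
    · have := W.depth_parent l hl
      exact .head ⟨hl, rfl⟩ (ih (W.parent l) (by omega))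

lemma IsDesc.parent_iterate {s l : W.Node} (h : W.IsDesc s l) :
    W.parent^[W.depth l - W.depth s] l = s ∧ W.depth s ≤ W.depth l := by
  induction h with
  | refl => simp
  | @tail b c _ hbc ih =>
    rw [depth_of_isChild hbc] at ih
    obtain ⟨hit, hle⟩ := ih
    refine ⟨?_, by omega⟩
    rw [show W.depth l - W.depth c = W.depth l - (W.depth c + 1) + 1 by omega,
      Function.iterate_succ_apply', hit, hbc.2]

lemma eq_of_isDesc_of_isChild {s l c₁ c₂ : W.Node}
    (h₁ : W.isChild c₁ s) (h₂ : W.isChild c₂ s)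
    (hl₁ : W.IsDesc c₁ l) (hl₂ : W.IsDesc c₂ l) : c₁ = c₂ := by
  rw [← hl₁.parent_iterate.1, ← hl₂.parent_iterate.1, depth_of_isChild h₁,
    depth_of_isChild h₂]

lemma isDesc_iff {s l : W.Node} :
    W.IsDesc s l ↔ l = s ∨ ∃ c, W.isChild c s ∧ W.IsDesc c l := by
  rw [IsDesc, Relation.ReflTransGen.cases_tail_iff, eq_comm]
  simp only [IsDesc, and_comm]

lemma IsDesc.eq_of_isLeaf {s l : W.Node} (h : W.IsDesc s l) (hs : W.isLeaf s) : l = s :=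
  (isDesc_iff.mp h).resolve_right fun ⟨c, hc, _⟩ => hs c hc

lemma strictAnc_iff_of_isChild {c s x : W.Node} (hc : W.isChild c s) :
    W.strictAnc x c ↔ x = s ∨ W.strictAnc x s := by
  rw [strictAnc, Relation.TransGen.head'_iff]
  constructor
  · rintro ⟨b, hcb, hbx⟩
    obtain rfl : b = s := hcb.2.symm.trans hc.2
    rcases Relation.reflTransGen_iff_eq_or_transGen.mp hbx with rfl | h
    · exact .inl rfl
    · exact .inr h
  · rintro (rfl | h)
    · exact ⟨x, hc, .refl⟩
    · exact ⟨s, hc, h.to_reflTransGen⟩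

end Proc

section Subtree

variable {A R : Type} {W : Proc A R}

lemma RE_root (W : Proc A R) : RE W W.root = Set.univ :=
  Set.eq_univ_of_forall fun _ _ hs' =>
    let ⟨_, hb, _⟩ := Relation.TransGen.head'_iff.mp hs'
    absurd rfl hb.1

lemma RE_of_isChild {c s : W.Node} (hc : W.isChild c s) : RE W c = RE W s \ {W.rule s} := by
  ext r
  simp only [RE, Set.mem_ofPred_eq, Set.mem_sdiff, Set.mem_singleton_iff,
    Proc.strictAnc_iff_of_isChild hc, or_imp, forall_and, forall_eq, ne_comm (b := r)]
  exact and_comm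

def piBelow (W : Proc A R) (s : W.Node) (J : Set A) : ℝ :=
  ∑ l ∈ Finset.univ.filter (fun l => W.isLeaf l ∧ W.interp l = J ∧ W.IsDesc s l),
    W.pathProb l

lemma piT_eq_piBelow_root (W : Proc A R) (J : Set A) : piT W J = piBelow W W.root J := by
  simp only [piT, piBelow, Proc.isDesc_root, and_true]

lemma piBelow_of_isLeaf {s : W.Node} (hs : W.isLeaf s) (J : Set A) :
    piBelow W s J = W.pathProb s * if W.interp s = J then 1 else 0 := by
  have hleaves : Finset.univ.filter (fun l => W.isLeaf l ∧ W.interp l = J ∧ W.IsDesc s l) =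
      if W.interp s = J then {s} else ∅ := by
    ext l
    constructor
    · intro hl
      obtain ⟨-, hlJ, hsl⟩ := (Finset.mem_filter.mp hl).2
      obtain rfl := hsl.eq_of_isLeaf hs
      simp [hlJ]
    · split_ifs with hsJ
      · intro hl
        obtain rfl := Finset.mem_singleton.mp hl
        exact Finset.mem_filter.mpr ⟨Finset.mem_univ l, hs, hsJ, .refl⟩
      · simp
  rw [piBelow, hleaves]
  split_ifs <;> simp

lemma piBelow_eq_sum_children {s : W.Node} (hs : ¬ W.isLeaf s) (J : Set A) :
    piBelow W s J = ∑ c ∈ W.children s, piBelow W c J := by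
  have hleaves : Finset.univ.filter (fun l => W.isLeaf l ∧ W.interp l = J ∧ W.IsDesc s l) =
      (W.children s).biUnion fun c =>
        Finset.univ.filter (fun l => W.isLeaf l ∧ W.interp l = J ∧ W.IsDesc c l) := by
    ext l
    simp only [Finset.mem_filter, Finset.mem_univ, true_and, Finset.mem_biUnion,
      Proc.mem_children, Proc.isDesc_iff (s := s)]
    constructor
    · rintro ⟨hl, hlJ, rfl | ⟨c, hc, hcl⟩⟩
      · exact absurd hl hs
      · exact ⟨c, hc, hl, hlJ, hcl⟩
    · rintro ⟨c, hc, hl, hlJ, hcl⟩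
      exact ⟨hl, hlJ, .inr ⟨c, hc, hcl⟩⟩
  rw [piBelow, hleaves, Finset.sum_biUnion]
  · rfl
  intro c₁ hc₁ c₂ hc₂ hne
  refine Finset.disjoint_left.mpr fun l hl₁ hl₂ => hne ?_
  exact Proc.eq_of_isDesc_of_isChild (Proc.mem_children.mp hc₁) (Proc.mem_children.mp hc₂)
    (Finset.mem_filter.mp hl₁).2.2.2 (Finset.mem_filter.mp hl₂).2.2.2

end Subtree

section Firing

variable {A R : Type} {C : R → CPLaw A} {W : Proc A R} {s : W.Node}

lemma FiresAt.sum_children_some (hfire : FiresAt C W s) (K : Set A → ℝ) :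
    ∑ c ∈ W.children s with (W.choice c).isSome, W.prob c * K (W.interp c) =
      ∑ i : Fin (C (W.rule s)).head.length, ((C (W.rule s)).head.get i).2 *
        K (insert ((C (W.rule s)).head.get i).1 (W.interp s)) := by
  symm
  refine Finset.sum_bij (fun i _ => (hfire.2.2.1 i i.2).choose) (fun i _ => ?_)
    (fun i₁ _ i₂ _ h => ?_) (fun c hc => ?_) (fun i _ => ?_)
  · obtain ⟨hc, hci⟩ := (hfire.2.2.1 i i.2).choose_spec
    simp [Proc.mem_children, hc, hci]
  · have h₁ := (hfire.2.2.1 i₁ i₁.2).choose_spec.2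
    have h₂ := (hfire.2.2.1 i₂ i₂.2).choose_spec.2
    rw [h, h₂, Option.some_inj] at h₁
    exact Fin.ext h₁.symm
  · obtain ⟨hc, hsome⟩ := Finset.mem_filter.mp hc
    obtain ⟨k, hk⟩ := Option.isSome_iff_exists.mp hsome
    have hc := Proc.mem_children.mp hc
    obtain ⟨hlt, -⟩ := (hfire.1 c hc).1 k hk
    obtain ⟨hc', hc'k⟩ := (hfire.2.2.1 k hlt).choose_spec
    exact ⟨⟨k, hlt⟩, Finset.mem_univ _, hfire.2.1 _ _ hc' hc (hc'k.trans hk.symm)⟩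
  · obtain ⟨hc, hci⟩ := (hfire.2.2.1 i i.2).choose_spec
    obtain ⟨_, hinterp, hprob⟩ := (hfire.1 _ hc).1 i hci
    rw [hinterp, hprob]

lemma FiresAt.sum_children_none (hfire : FiresAt C W s) (K : Set A → ℝ) :
    ∑ c ∈ W.children s with ¬ (W.choice c).isSome, W.prob c * K (W.interp c) =
      (1 - (C (W.rule s)).psum) * K (W.interp s) := by
  simp only [Bool.not_eq_true, Option.isSome_eq_false_iff, Option.isNone_iff_eq_none]
  by_cases hps : (C (W.rule s)).psum < 1
  · obtain ⟨c, hc, hcnone⟩ := hfire.2.2.2 hps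
    have hnone : {c' ∈ W.children s | W.choice c' = none} = {c} := by
      ext c'
      simp only [Finset.mem_filter, Proc.mem_children, Finset.mem_singleton]
      constructor
      · exact fun ⟨hc', hc'none⟩ => hfire.2.1 _ _ hc' hc (hc'none.trans hcnone.symm)
      · rintro rfl
        exact ⟨hc, hcnone⟩
    obtain ⟨-, hinterp, hprob⟩ := (hfire.1 c hc).2 hcnone
    rw [hnone, Finset.sum_singleton, hinterp, hprob]
  · have hnone : {c ∈ W.children s | W.choice c = none} = ∅ :=
      Finset.filter_eq_empty_iff.mpr fun c hc hcnone =>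
        hps ((hfire.1 c (Proc.mem_children.mp hc)).2 hcnone).1
    have hsum : (C (W.rule s)).psum = 1 := le_antisymm (C (W.rule s)).head_sum (not_lt.mp hps)
    rw [hnone, Finset.sum_empty, hsum, sub_self, zero_mul]

lemma FiresAt.sum_children (hfire : FiresAt C W s) (K : Set A → ℝ) :
    ∑ c ∈ W.children s, W.prob c * K (W.interp c) = (C (W.rule s)).expect (W.interp s) K := by
  rw [← Finset.sum_filter_add_sum_filter_not _ fun c => (W.choice c).isSome,
    hfire.sum_children_some, hfire.sum_children_none, CPLaw.expect]

end Firing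

lemma IsExec.piBelow_eq {A R : Type} [Finite A] [Fintype R] {C : R → CPLaw A} {W : Proc A R}
    (hW : IsExec C W) (J : Set A) (s : W.Node) :
    piBelow W s J = W.pathProb s * canonDist C (RE W s).toFinset (W.interp s) J := by
  induction hS : (RE W s).toFinset using Finset.strongInduction generalizing s with
  | H S ih =>
  by_cases hs : W.isLeaf s
  · rw [piBelow_of_isLeaf hs, canonDist_of_not_enabled]
    intro r _ hr
    rw [← hS, Set.coe_toFinset] at hr
    exact hW.1.not_enabled_of_isLeaf hs r hr
  obtain ⟨hRE, -, hfire⟩ := hW.1.2.2.2.1 s hs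
  have hrS : W.rule s ∈ S := hS ▸ Set.mem_toFinset.mpr hRE
  have hS_child (c : W.Node) (hc : c ∈ W.children s) :
      (RE W c).toFinset = S.erase (W.rule s) := by
    rw [← hS, ← Finset.coe_inj, Finset.coe_erase, Set.coe_toFinset, Set.coe_toFinset,
      RE_of_isChild (Proc.mem_children.mp hc)]
  have henabled : Enabled C (W.interp s) S (W.rule s) := by
    rw [← hS, Set.coe_toFinset]
    exact hW.enabled hs
  calc piBelow W s J = ∑ c ∈ W.children s, piBelow W c J := piBelow_eq_sum_children hs J
    _ = ∑ c ∈ W.children s, W.pathProb s *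
          (W.prob c * canonDist C (S.erase (W.rule s)) (W.interp c) J) := by
      refine Finset.sum_congr rfl fun c hc => ?_
      have hc' := Proc.mem_children.mp hc
      rw [ih _ (Finset.erase_ssubset hrS) c (hS_child c hc), W.pathProb_parent c hc'.1, hc'.2]
      ring
    _ = W.pathProb s * canonDist C S (W.interp s) J := by
      rw [← Finset.mul_sum, hfire.sum_children fun I => canonDist C (S.erase (W.rule s)) I J,
        canonDist_eq_expect J hrS henabled]

/-- Uniqueness of the semantics of arbitrary CP-theories: any two execution models of a
CP-theory (whose bodies may contain negation) generate the same probability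
distribution over interpretations. -/
theorem uniqueness_general {A R : Type} [Fintype A] [Fintype R]
    (C : R → CPLaw A)
    (W₁ W₂ : Proc A R) (h₁ : IsExec C W₁) (h₂ : IsExec C W₂)
    (J : Set A) :
    piT W₁ J = piT W₂ J := by
  have hpiT {W : Proc A R} (hW : IsExec C W) : piT W J = canonDist C Finset.univ ∅ J := by
    have hRE : (RE W W.root).toFinset = Finset.univ := by simp [RE_root]
    rw [piT_eq_piBelow_root, hW.piBelow_eq, W.pathProb_root, hW.1.1, hRE, one_mul]
  rw [hpiT h₁, hpiT h₂]

end CP
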